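/- Let b ≥ 1 and fix t ∈ ℝ and ε > 0 with ε < 1. Define θ = arccos((1 + e^{2t} − ε²)/(2e^t)) whenever the argument lies in [−1, 1]. Then for y ∈ ℂ with |y| = e^{t/b}: |y^b + 1| < ε if and only if the argument v = arg(y) satisfies |bv − (2c+1)π| < θ for some integer c with 0 ≤ c < b (angles taken mod 2πb appropriately); in particular the set {y : |y| = e^{t/b}, |y^b+1| < ε} is a disjoint union of b open arcs. -/

import Mathlib

open Real Complex

/-- The attaching-region computation: for `|y| = e^{t/b}`, one has `|y^b+1| < ε`
exactly when `b·arg y` lies within `θ = arccos((1 + e^{2t} − ε²)/(2e^t))` of an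
odd multiple of `π`. -/
theorem attaching_region (b : ℕ) (hb : 1 ≤ b) (t : ℝ) (ε : ℝ)
    (hε0 : 0 < ε) (hε1 : ε < 1)
    (harg : -1 ≤ (1 + Real.exp (2 * t) - ε ^ 2) / (2 * Real.exp t) ∧
            (1 + Real.exp (2 * t) - ε ^ 2) / (2 * Real.exp t) ≤ 1)
    (y : ℂ) (hy : ‖y‖ = Real.exp (t / b)) :
    ‖y ^ b + 1‖ < ε ↔
      ∃ m : ℤ, Odd m ∧
        |(b : ℝ) * Complex.arg y - m * Real.pi|
          < Real.arccos ((1 + Real.exp (2 * t) - ε ^ 2) / (2 * Real.exp t)) := by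
  have hbne : (b : ℝ) ≠ 0 := Nat.cast_ne_zero.mpr (by omega)
  set X : ℝ := (1 + Real.exp (2 * t) - ε ^ 2) / (2 * Real.exp t) with hXdef
  set θ : ℝ := Real.arccos X with hθdef
  set u : ℝ := Complex.arg (y ^ b) with hudef
  set v : ℝ := (b : ℝ) * Complex.arg y with hvdef
  have hyne : y ≠ 0 := by
    intro h
    rw [h, norm_zero] at hy
    exact (Real.exp_pos _).ne' hy.symm
  have hzabs : ‖y ^ b‖ = Real.exp t := by
    rw [norm_pow, hy, ← Real.exp_nat_mul]
    congr 1
    field_simp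
  have hzne : y ^ b ≠ 0 := by
    intro h
    rw [h, norm_zero] at hzabs
    exact (Real.exp_pos _).ne' hzabs.symm
  -- relation between v and u modulo 2π
  obtain ⟨k, hk⟩ : ∃ k : ℤ, v = u + 2 * π * k := by
    have h1 : (↑‖y‖ : ℂ) ^ b * Complex.exp ((b : ℂ) * (Complex.arg y * I))
        = (↑‖y‖ : ℂ) ^ b * Complex.exp (↑u * I) := by
      rw [Complex.exp_nat_mul, ← mul_pow, Complex.norm_mul_exp_arg_mul_I, hudef]
      rw [← Complex.ofReal_pow, ← norm_pow, Complex.norm_mul_exp_arg_mul_I]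
    have habsne : ((‖y‖ : ℂ)) ^ b ≠ 0 := by
      simp [pow_ne_zero, norm_ne_zero_iff.mpr hyne]
    have h2 : Complex.exp ((b : ℂ) * (Complex.arg y * I)) = Complex.exp (↑u * I) :=
      mul_left_cancel₀ habsne h1
    obtain ⟨n, hn⟩ := Complex.exp_eq_exp_iff_exists_int.mp h2
    refine ⟨n, ?_⟩
    have := congrArg Complex.im hn
    simp [Complex.mul_im, Complex.mul_re] at this
    rw [hvdef]
    push_cast
    linarith [this]
  have hEpos : 0 < Real.exp t := Real.exp_pos t
  have hcosθ : Real.cos θ = X := Real.cos_arccos harg.1 harg.2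
  have hθmem : θ ∈ Set.Icc 0 π := ⟨Real.arccos_nonneg X, Real.arccos_le_pi X⟩
  have hupi : |u| ≤ π := Complex.abs_arg_le_pi _
  -- step 1: the norm condition is equivalent to a cosine condition
  have step1 : ‖y ^ b + 1‖ < ε ↔ Real.cos u < -X := by
    have hre : (y ^ b).re = Real.exp t * Real.cos u := by
      have := Complex.cos_arg hzne
      rw [← hudef] at this
      rw [this, hzabs]
      field_simp
    have hsq : (‖y ^ b + 1‖) ^ 2
        = Real.exp t ^ 2 + 2 * Real.exp t * Real.cos u + 1 := by
      rw [Complex.sq_norm, Complex.normSq_apply]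
      simp [Complex.add_re, Complex.add_im, hre]
      nlinarith [Complex.sq_norm (y ^ b), Complex.normSq_apply (y ^ b), hzabs, hre]
    have hexp2 : Real.exp (2 * t) = Real.exp t ^ 2 := by
      rw [two_mul, Real.exp_add]; ring
    constructor
    · intro h
      have h2 : (‖y ^ b + 1‖) ^ 2 < ε ^ 2 :=
        pow_lt_pow_left₀ h (norm_nonneg _) two_ne_zero
      rw [hsq] at h2
      rw [hXdef, lt_neg, div_lt_iff₀ (by positivity)]
      nlinarith
    · intro h
      rw [hXdef, lt_neg, div_lt_iff₀ (by positivity)] at h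
      have h2 : (‖y ^ b + 1‖) ^ 2 < ε ^ 2 := by
        rw [hsq]; nlinarith
      exact lt_of_pow_lt_pow_left₀ 2 hε0.le h2
  -- step 2: cosine condition ↔ π - |u| < θ
  have step2 : Real.cos u < -X ↔ π - |u| < θ := by
    have h1 : Real.cos u = Real.cos |u| := (Real.cos_abs u).symm
    have h2 : Real.cos (π - θ) = -X := by rw [Real.cos_pi_sub, hcosθ]
    rw [h1, ← h2]
    have hmem1 : |u| ∈ Set.Icc 0 π := ⟨abs_nonneg u, hupi⟩
    have hmem2 : π - θ ∈ Set.Icc 0 π := by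
      constructor <;> [linarith [hθmem.2]; linarith [hθmem.1]]
    rw [Real.strictAntiOn_cos.lt_iff_gt hmem1 hmem2]
    constructor <;> intro h <;> linarith
  -- step 3: π - |u| < θ ↔ existence of odd m
  have step3 : π - |u| < θ ↔ ∃ m : ℤ, Odd m ∧ |v - m * π| < θ := by
    constructor
    · intro h
      by_cases hu0 : 0 ≤ u
      · refine ⟨1 + 2 * k, ⟨k, by ring⟩, ?_⟩
        have h1 : v - ((1 + 2 * k : ℤ) : ℝ) * π = u - π := by rw [hk]; push_cast; ring
        rw [h1, _root_.abs_of_nonpos (by linarith [_root_.abs_of_nonneg hu0, hupi] : u - π ≤ 0)]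
        rw [_root_.abs_of_nonneg hu0] at h; linarith
      · push_neg at hu0
        refine ⟨-1 + 2 * k, ⟨-1 + k, by ring⟩, ?_⟩
        have h1 : v - ((-1 + 2 * k : ℤ) : ℝ) * π = u + π := by rw [hk]; push_cast; ring
        rw [h1, _root_.abs_of_nonneg (by linarith [neg_abs_le u, hupi, _root_.abs_of_neg hu0] : 0 ≤ u + π)]
        rw [_root_.abs_of_neg hu0] at h; linarith
    · rintro ⟨m, hm, hlt⟩
      have hm' : Odd (m - 2 * k) := by
        obtain ⟨j, hj⟩ := hm
        exact ⟨j - k, by omega⟩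
      have hmne : m - 2 * k ≠ 0 := by
        intro h0
        rw [h0] at hm'
        exact (Int.not_odd_iff_even.mpr Even.zero) hm'
      have hge1 : (1 : ℝ) ≤ |((m - 2 * k : ℤ) : ℝ)| := by
        rw [← Int.cast_abs]
        exact_mod_cast Int.one_le_abs (by omega)
      have heq : v - m * π = u - ((m - 2 * k : ℤ) : ℝ) * π := by
        rw [hk]; push_cast; ring
      rw [heq] at hlt
      have hpi : 0 < π := Real.pi_pos
      have htri : |((m - 2 * k : ℤ) : ℝ) * π| - |u| ≤ |u - ((m - 2 * k : ℤ) : ℝ) * π| := by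
        rw [abs_sub_comm]
        exact abs_sub_abs_le_abs_sub _ _
      have : π ≤ |((m - 2 * k : ℤ) : ℝ) * π| := by
        rw [abs_mul, _root_.abs_of_pos hpi]
        have h9 : 1 * π ≤ |((m - 2 * k : ℤ) : ℝ)| * π :=
          mul_le_mul_of_nonneg_right hge1 hpi.le
        linarith
      linarith
  rw [step1, step2]
  exact step3
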